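/- arXiv:1707.02417 — 4 statements merged into one kernel-verified Lean document; each statement's English description precedes it below -/
import Mathlib

section
/- For all natural numbers n and k with 0 ≤ k ≤ n-1, Σ_{m=k}^{n-1} (-1)^{n+m} (2m+1)/((n-m)(n+m+1)) = -H_{2n} + H_{n+k} + H_n - H_{n-k} - H_{⌊(n+k)/2⌋} + H_{⌊(n-k)/2⌋}. -/
/-!
Splitting `(2m+1)/((n-m)(n+m+1)) = 1/(n-m) - 1/(n+m+1)` turns the sum into a difference of
partial sums of the alternating harmonic series `altH N = ∑_{i=1}^N (-1)^(i+1)/i`, namely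
`altH (n+k) - altH (n-k) - altH (2n)`; the identity then follows from
`altH N = H N - H ⌊N/2⌋`.
-/

/-- The `N`-th harmonic number `H_N = ∑_{k=1}^N 1/k` (with `H_0 = 0`). -/
noncomputable def H (N : ℕ) : ℝ := ∑ k ∈ Finset.Icc 1 N, (1 : ℝ) / k

lemma H_succ (N : ℕ) : H (N + 1) = H N + 1 / (N + 1) := by
  rw [H, Finset.sum_Icc_succ_top (by omega), H]
  push_cast
  ring

noncomputable def altH (N : ℕ) : ℝ := ∑ i ∈ Finset.Icc 1 N, (-1 : ℝ) ^ (i + 1) / i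

lemma altH_succ (N : ℕ) : altH (N + 1) = altH N + (-1) ^ N / (N + 1) := by
  rw [altH, Finset.sum_Icc_succ_top (by omega), altH]
  push_cast
  ring

lemma altH_eq_H_sub_H_div_two (N : ℕ) : altH N = H N - H (N / 2) := by
  induction N with
  | zero => simp [altH, H]
  | succ N ih =>
    rw [altH_succ, ih, H_succ]
    rcases Nat.even_or_odd' N with ⟨t, rfl | rfl⟩
    · rw [show (2 * t + 1) / 2 = 2 * t / 2 by omega, pow_mul, neg_one_sq, one_pow]
      ring
    · rw [show (2 * t + 1 + 1) / 2 = t + 1 by omega, show (2 * t + 1) / 2 = t by omega,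
        H_succ t, pow_succ, pow_mul, neg_one_sq, one_pow]
      push_cast
      field_simp
      ring

lemma neg_one_pow_mul_div_eq_altH_sub {n m : ℕ} (hmn : m < n) :
    (-1 : ℝ) ^ (n + m) * (2 * m + 1) / (((n : ℝ) - m) * ((n : ℝ) + m + 1)) =
      (altH (n - (m + 1)) - altH (n + (m + 1))) - (altH (n - m) - altH (n + m)) := by
  obtain ⟨j, rfl⟩ := Nat.exists_eq_add_of_lt hmn
  rw [show m + j + 1 - (m + 1) = j by omega, show m + j + 1 - m = j + 1 by omega,
    ← add_assoc, altH_succ, altH_succ,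
    show m + j + 1 + m = 2 * m + 1 + j by ring, pow_add, pow_succ, pow_mul]
  push_cast
  have hj : (j : ℝ) + 1 ≠ 0 := by positivity
  have hjm : (2 * m + 1 + j : ℝ) + 1 ≠ 0 := by positivity
  rw [show (m + j + 1 - m : ℝ) = j + 1 by ring]
  field_simp
  ring

theorem alternating_partial_fraction_sum_general (n k : ℕ) (hk : k ≤ n - 1) :
    ∑ m ∈ Finset.Ico k n,
        (-1 : ℝ) ^ (n + m) * (2 * m + 1) / (((n : ℝ) - m) * ((n : ℝ) + m + 1)) =
      -H (2 * n) + H (n + k) + H n - H (n - k)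
        - H ((n + k) / 2) + H ((n - k) / 2) := by
  rw [Finset.sum_congr rfl fun m hm => neg_one_pow_mul_div_eq_altH_sub (Finset.mem_Ico.1 hm).2,
    Finset.sum_Ico_sub (fun m => altH (n - m) - altH (n + m)) (by omega)]
  simp only [altH_eq_H_sub_H_div_two, Nat.sub_self, Nat.zero_div, ← two_mul,
    Nat.mul_div_cancel_left n two_pos]
  ring

/-- For natural numbers `0 ≤ k ≤ n-1`,
`∑_{m=k}^{n-1} (-1)^{n+m} (2m+1)/((n-m)(n+m+1))
  = -H_{2n} + H_{n+k} + H_n - H_{n-k} - H_{⌊(n+k)/2⌋} + H_{⌊(n-k)/2⌋}`. -/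
theorem alternating_partial_fraction_sum (n k : ℕ) (hk : k ≤ n - 1) (hn : 1 ≤ n) :
    ∑ m ∈ Finset.Ico k n,
        (-1 : ℝ) ^ (n + m) * (2 * m + 1) / (((n : ℝ) - m) * ((n : ℝ) + m + 1)) =
      -H (2 * n) + H (n + k) + H n - H (n - k)
        - H ((n + k) / 2) + H ((n - k) / 2) :=
  alternating_partial_fraction_sum_general n k hk
end

section
/- For every natural number n, Σ_{k=0}^{n-1} (2k+1)^2 / ((n-k)^2 (n+k+1)^2) = Σ_{k=1}^{2n} 1/k^2 - 2 H_{2n}/(2n+1). -/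
open Finset

theorem sub_sq_div_sq_mul_sq {K : Type*} [Field K] {a b : K} (ha : a ≠ 0) (hb : b ≠ 0)
    (hab : a + b ≠ 0) :
    (b - a) ^ 2 / (a ^ 2 * b ^ 2) =
      (1 / a ^ 2 - 2 / ((a + b) * a)) + (1 / b ^ 2 - 2 / ((a + b) * b)) := by
  field_simp
  ring

theorem Finset.sum_Icc_one_two_mul_eq_sum_range {M : Type*} [AddCommMonoid M] (f : ℕ → M)
    (n : ℕ) :
    ∑ j ∈ Icc 1 (2 * n), f j = ∑ k ∈ range n, (f (n - k) + f (n + k + 1)) := by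
  have hreflect : ∑ k ∈ range n, f (n - k) = ∑ k ∈ range n, f (k + 1) := by
    rw [← sum_range_reflect]
    refine sum_congr rfl fun k hk => ?_
    rw [mem_range] at hk
    congr 1
    omega
  rw [sum_add_distrib, hreflect, ← Ico_add_one_right_eq_Icc, sum_Ico_eq_sum_range,
    show 2 * n + 1 - 1 = n + n by omega, sum_range_add]
  congr 1 <;> exact sum_congr rfl fun k _ => congrArg f (by omega)

/-- For every natural number `n`,
`∑_{k=0}^{n-1} (2k+1)²/((n-k)²(n+k+1)²) = ∑_{k=1}^{2n} 1/k² - 2 H_{2n}/(2n+1)`. -/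
theorem sum_of_squares_partial_fractions (n : ℕ) :
    ∑ k ∈ Finset.range n,
        (2 * (k : ℝ) + 1) ^ 2 / (((n : ℝ) - k) ^ 2 * ((n : ℝ) + k + 1) ^ 2) =
      (∑ k ∈ Finset.Icc 1 (2 * n), (1 : ℝ) / (k : ℝ) ^ 2)
        - 2 * H (2 * n) / (2 * n + 1) := by
  set g : ℕ → ℝ := fun j => 1 / (j : ℝ) ^ 2 - 2 / ((2 * n + 1) * j)
  have hsplit : ∀ k ∈ range n, (2 * (k : ℝ) + 1) ^ 2 / (((n : ℝ) - k) ^ 2 * ((n : ℝ) + k + 1) ^ 2)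
      = g (n - k) + g (n + k + 1) := by
    intro k hk
    have hkn : (k : ℝ) < n := by exact_mod_cast mem_range.mp hk
    simp only [g]
    push_cast [Nat.cast_sub (mem_range.mp hk).le]
    rw [show (2 * n + 1 : ℝ) = (n - k) + (n + k + 1) by ring,
      show (2 * k + 1 : ℝ) = (n + k + 1) - (n - k) by ring]
    exact sub_sq_div_sq_mul_sq (by linarith) (by positivity) (by linarith)
  rw [sum_congr rfl hsplit, ← sum_Icc_one_two_mul_eq_sum_range, sum_sub_distrib, H, mul_sum,
    sum_div]
  congr 1
  refine sum_congr rfl fun j _ => ?_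
  rw [mul_one_div, div_div, mul_comm (j : ℝ)]
end

section
/- For every natural number n, Σ_{k=0}^{n-1} (-1)^{n+k} (2n+1)(2k+1) / ((n-k)^2 (n+k+1)^2) = (1/2) Σ_{k=1}^{n} 1/k^2 - Σ_{k=1}^{2n} 1/k^2. -/
/-! Since `(2n+1)(2k+1) = (n+k+1)² - (n-k)²`, the `k`-th summand splits as `u (n-k) + u (n+k+1)`
with `u j = (-1)^j / j²`, and as `k` runs through `0, …, n-1` the indices `n-k` and `n+k+1` run
through `1, …, 2n` exactly once. The alternating sum `∑_{j ≤ 2n} (-1)^j / j²` is twice its even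
part minus the full sum, and the even part is `(1/4) ∑_{k ≤ n} 1/k²`. -/

open Finset

theorem Finset.sum_range_reflect_add_eq_sum_Icc {M : Type*} [AddCommMonoid M] (f : ℕ → M)
    (n : ℕ) : ∑ k ∈ range n, (f (n - k) + f (n + k + 1)) = ∑ j ∈ Icc 1 (2 * n), f j := by
  have shift (N : ℕ) : ∑ j ∈ Icc 1 N, f j = ∑ k ∈ range N, f (k + 1) := by
    rw [← Ico_add_one_right_eq_Icc, sum_Ico_eq_sum_range, Nat.add_sub_cancel]
    simp only [add_comm 1]
  rw [shift, two_mul, sum_range_add, sum_add_distrib, ← sum_range_reflect (fun k ↦ f (k + 1))]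
  congr 1
  exact sum_congr rfl fun k hk ↦ congrArg f (by have := mem_range.1 hk; omega)

theorem Finset.sum_Icc_neg_one_pow_mul {R : Type*} [CommRing R] (f : ℕ → R) (n : ℕ) :
    ∑ j ∈ Icc 1 (2 * n), (-1) ^ j * f j =
      2 * ∑ k ∈ Icc 1 n, f (2 * k) - ∑ j ∈ Icc 1 (2 * n), f j := by
  induction n with
  | zero => simp
  | succ n ih =>
    rw [show 2 * (n + 1) = 2 * n + 1 + 1 by ring]
    have hodd : (-1 : R) ^ (2 * n + 1) = -1 := Odd.neg_one_pow ⟨n, rfl⟩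
    have heven : (-1 : R) ^ (2 * n + 1 + 1) = 1 := Even.neg_one_pow ⟨n + 1, by ring⟩
    rw [sum_Icc_succ_top (by omega), sum_Icc_succ_top (by omega), sum_Icc_succ_top (by omega),
      sum_Icc_succ_top (by omega), sum_Icc_succ_top (by omega), ih, hodd, heven,
      show 2 * (n + 1) = 2 * n + 1 + 1 by ring]
    ring

theorem alternating_summand_eq_add {n k : ℕ} (hk : k < n) :
    (-1 : ℝ) ^ (n + k) * ((2 * (n : ℝ) + 1) * (2 * (k : ℝ) + 1)) /
        (((n : ℝ) - k) ^ 2 * ((n : ℝ) + k + 1) ^ 2) =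
      (-1 : ℝ) ^ (n - k) / ((n - k : ℕ) : ℝ) ^ 2 +
        (-1 : ℝ) ^ (n + k + 1) / ((n + k + 1 : ℕ) : ℝ) ^ 2 := by
  have hsub : ((n - k : ℕ) : ℝ) ≠ 0 := Nat.cast_ne_zero.2 (by omega)
  have hsign : (-1 : ℝ) ^ (n + k) = (-1) ^ (n - k) := by
    rw [show n + k = n - k + 2 * k by omega, pow_add, pow_mul, neg_one_sq, one_pow, mul_one]
  have hdiff : (2 * (n : ℝ) + 1) * (2 * k + 1) = (n + k + 1) ^ 2 - (n - k) ^ 2 := by ring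
  rw [Nat.cast_sub hk.le] at hsub ⊢
  rw [hdiff, hsign, pow_succ, ← hsign]
  push_cast
  field_simp
  ring

/-- For every natural number `n`,
`∑_{k=0}^{n-1} (-1)^{n+k} (2n+1)(2k+1)/((n-k)²(n+k+1)²)
  = (1/2) ∑_{k=1}^{n} 1/k² - ∑_{k=1}^{2n} 1/k²`. -/
theorem alternating_sum_of_squares_partial_fractions (n : ℕ) :
    ∑ k ∈ Finset.range n,
        (-1 : ℝ) ^ (n + k) * ((2 * (n : ℝ) + 1) * (2 * (k : ℝ) + 1)) /
          (((n : ℝ) - k) ^ 2 * ((n : ℝ) + k + 1) ^ 2) =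
      (1 / 2) * (∑ k ∈ Finset.Icc 1 n, (1 : ℝ) / (k : ℝ) ^ 2)
        - ∑ k ∈ Finset.Icc 1 (2 * n), (1 : ℝ) / (k : ℝ) ^ 2 := by
  rw [sum_congr rfl fun k hk ↦ alternating_summand_eq_add (mem_range.1 hk),
    sum_range_reflect_add_eq_sum_Icc (fun j ↦ (-1 : ℝ) ^ j / (j : ℝ) ^ 2)]
  simp_rw [div_eq_mul_one_div ((-1 : ℝ) ^ _)]
  rw [sum_Icc_neg_one_pow_mul, mul_sum, mul_sum]
  congr 1
  refine sum_congr rfl fun k _ ↦ ?_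
  push_cast
  ring
end

section
/- For every natural number n, Σ_{k=0}^{n-1} c_{nk} = 4 Σ_{k=1}^{2n} 1/k^2 - 2 Σ_{k=1}^{n} 1/k^2 - 4 (H_{2n} - H_n)^2; equivalently, the coefficient c_{nn} := -Σ_{k=0}^{n-1} c_{nk} equals 4(H_{2n}-H_n)^2 - 4 Σ_{k=1}^{2n} 1/k^2 + 2 Σ_{k=1}^{n} 1/k^2. -/
/-- The coefficient `c_{nk}` for `0 ≤ k ≤ n-1`:
`c_{nk} = (-1)^{n+k} (8(2k+1)/((n-k)(n+k+1)))
            (H_{n+k} - H_{n-k} - H_{⌊(n+k)/2⌋} + H_{⌊(n-k)/2⌋})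
          - 4(2k+1)²/((n-k)²(n+k+1)²)
          - (-1)^{n+k} 4(2n+1)(2k+1)/((n-k)²(n+k+1)²)`. -/
noncomputable def c (n k : ℕ) : ℝ :=
  (-1 : ℝ) ^ (n + k) * (8 * (2 * (k : ℝ) + 1) / (((n : ℝ) - k) * ((n : ℝ) + k + 1))) *
      (H (n + k) - H (n - k) - H ((n + k) / 2) + H ((n - k) / 2))
    - 4 * (2 * (k : ℝ) + 1) ^ 2 / (((n : ℝ) - k) ^ 2 * ((n : ℝ) + k + 1) ^ 2)
    - (-1 : ℝ) ^ (n + k) * (4 * (2 * (n : ℝ) + 1) * (2 * (k : ℝ) + 1)) /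
        (((n : ℝ) - k) ^ 2 * ((n : ℝ) + k + 1) ^ 2)


/-!
Put `a = n - k`. The factor `8(2k+1)/((n-k)(n+k+1))` becomes `8(1/a - 1/(2n+1-a))`, and
`H_m - H_{⌊m/2⌋} = -∑_{i ≤ m} (-1)^i/i`. The folded terms
`v_a = (-1)^a (1/a - 1/(2n+1-a))` and `w_a = (-1)^a (1/a² - 1/(2n+1-a)²)` (`foldTerm 1` and
`foldTerm 2`) pair the summands `i = a` and `i = 2n+1-a` of the alternating sums of `1/i` and `1/i²`,
so the bracket in `c_{n,n-a}` is `-∑_{a<i≤n} v_i` and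
`c_{n,n-a} = -8 v_a ∑_{a<i≤n} v_i - 4 v_a² - 4 w_a`.
Summed over `a`, the identity `(∑ v)² = ∑ v² + 2 ∑_{a<i} v_a v_i` collapses this to
`-4 (∑ v)² - 4 ∑ w`, and unfolding gives `∑ v = H_n - H_{2n}` and `∑ w = ∑_{i ≤ 2n} (-1)^i/i²`.
-/

open Finset

theorem sum_Ioc_neg_one_pow_mul_add_sum {R : Type*} [CommRing R] (f : ℕ → R) (m : ℕ) :
    ∑ i ∈ Ioc 0 m, (-1) ^ i * f i + ∑ i ∈ Ioc 0 m, f i = 2 * ∑ j ∈ Ioc 0 (m / 2), f (2 * j) := by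
  induction m with
  | zero => simp
  | succ m ih =>
    rw [sum_Ioc_succ_top (Nat.zero_le m), sum_Ioc_succ_top (Nat.zero_le m)]
    rcases Nat.even_or_odd' m with ⟨t, rfl | rfl⟩
    · rw [show 2 * t / 2 = t by omega] at ih
      rw [show (2 * t + 1) / 2 = t by omega, pow_succ, (even_two_mul t).neg_one_pow]
      linear_combination ih
    · rw [show (2 * t + 1 + 1) / 2 = t + 1 by omega, sum_Ioc_succ_top (Nat.zero_le t)]
      rw [show (2 * t + 1) / 2 = t by omega] at ih
      rw [show 2 * t + 1 + 1 = 2 * (t + 1) by ring, (even_two_mul (t + 1)).neg_one_pow]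
      linear_combination ih

theorem sum_Ioc_add_reflect {M : Type*} [AddCommMonoid M] (g : ℕ → M) {a n : ℕ} (h : a ≤ n) :
    ∑ i ∈ Ioc a n, (g i + g (2 * n + 1 - i)) = ∑ i ∈ Ioc a (2 * n - a), g i := by
  have reflect : ∑ i ∈ Ioc a n, g (2 * n + 1 - i) = ∑ i ∈ Ioc n (2 * n - a), g i := by
    apply sum_nbij' (fun i => 2 * n + 1 - i) (fun i => 2 * n + 1 - i)
    all_goals intro i hi
    all_goals first | rfl | (simp only [mem_Ioc] at hi ⊢; omega)
  rw [sum_add_distrib, reflect, sum_Ioc_consecutive _ h (by omega)]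

theorem sq_sum_Ioc_eq {R : Type*} [CommRing R] (f : ℕ → R) (n : ℕ) :
    (∑ i ∈ Ioc 0 n, f i) ^ 2 =
      ∑ i ∈ Ioc 0 n, f i ^ 2 + 2 * ∑ a ∈ Ioc 0 n, f a * ∑ i ∈ Ioc a n, f i := by
  induction n with
  | zero => simp
  | succ n ih =>
    have inner : ∑ a ∈ Ioc 0 n, f a * ∑ i ∈ Ioc a (n + 1), f i =
        ∑ a ∈ Ioc 0 n, f a * ∑ i ∈ Ioc a n, f i + (∑ a ∈ Ioc 0 n, f a) * f (n + 1) := by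
      rw [sum_mul, ← sum_add_distrib]
      refine sum_congr rfl fun a ha => ?_
      rw [sum_Ioc_succ_top (mem_Ioc.1 ha).2, mul_add]
    simp only [sum_Ioc_succ_top (Nat.zero_le n), inner, Ioc_self, sum_empty]
    linear_combination ih

theorem sum_range_eq_sum_Ioc_sub {M : Type*} [AddCommMonoid M] (f : ℕ → M) (n : ℕ) :
    ∑ k ∈ range n, f k = ∑ a ∈ Ioc 0 n, f (n - a) := by
  apply sum_nbij' (fun k => n - k) (fun a => n - a)
  all_goals intro i hi
  all_goals first
    | rw [Nat.sub_sub_self (mem_range.1 hi).le]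
    | (simp only [mem_range, mem_Ioc] at hi ⊢; omega)

noncomputable def foldTerm (p n i : ℕ) : ℝ :=
  (-1) ^ i * (1 / (i : ℝ) ^ p - 1 / (2 * n + 1 - i : ℝ) ^ p)

theorem foldTerm_eq {p n i : ℕ} (hi : i ≤ 2 * n + 1) :
    foldTerm p n i =
      (-1) ^ i / (i : ℝ) ^ p + (-1) ^ (2 * n + 1 - i) / ((2 * n + 1 - i : ℕ) : ℝ) ^ p := by
  have sign : (-1 : ℝ) ^ (2 * n + 1 - i) = -(-1) ^ i := by
    rw [neg_one_pow_eq_pow_mod_two, show (2 * n + 1 - i) % 2 = (i + 1) % 2 by omega,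
      ← neg_one_pow_eq_pow_mod_two, pow_succ, mul_neg_one]
  rw [foldTerm, sign, Nat.cast_sub hi]
  push_cast
  ring

theorem sum_Ioc_foldTerm (p : ℕ) {a n : ℕ} (h : a ≤ n) :
    ∑ i ∈ Ioc a n, foldTerm p n i = ∑ i ∈ Ioc a (2 * n - a), (-1) ^ i / (i : ℝ) ^ p := by
  rw [← sum_Ioc_add_reflect (fun i => (-1) ^ i / (i : ℝ) ^ p) h]
  exact sum_congr rfl fun i hi => foldTerm_eq (by have := (mem_Ioc.1 hi).2; omega)

theorem H_eq_sum_Ioc (m : ℕ) : H m = ∑ i ∈ Ioc 0 m, 1 / (i : ℝ) := by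
  rw [H, ← Icc_add_one_left_eq_Ioc, zero_add]

theorem H_sub_H_div_two (m : ℕ) : H m - H (m / 2) = -∑ i ∈ Ioc 0 m, (-1) ^ i / (i : ℝ) := by
  have parity := sum_Ioc_neg_one_pow_mul_add_sum (fun i => 1 / (i : ℝ)) m
  have half : ∀ j : ℕ, 2 * (1 / ((2 * j : ℕ) : ℝ)) = 1 / (j : ℝ) := fun j => by
    push_cast; rcases eq_or_ne (j : ℝ) 0 with h | h
    · simp [h]
    · field_simp
  simp only [mul_sum, half, mul_one_div] at parity
  rw [H_eq_sum_Ioc, H_eq_sum_Ioc]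
  linear_combination parity

theorem sum_foldTerm_one (n : ℕ) : ∑ i ∈ Ioc 0 n, foldTerm 1 n i = H n - H (2 * n) := by
  have harmonic := H_sub_H_div_two (2 * n)
  rw [show 2 * n / 2 = n by omega] at harmonic
  rw [sum_Ioc_foldTerm 1 (Nat.zero_le n), Nat.sub_zero]
  simp only [pow_one]
  linear_combination harmonic

theorem sum_foldTerm_two (n : ℕ) :
    ∑ i ∈ Ioc 0 n, foldTerm 2 n i =
      (∑ k ∈ Icc 1 n, (1 : ℝ) / (k : ℝ) ^ 2) / 2 - ∑ k ∈ Icc 1 (2 * n), (1 : ℝ) / (k : ℝ) ^ 2 := by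
  have parity := sum_Ioc_neg_one_pow_mul_add_sum (fun i => 1 / (i : ℝ) ^ 2) (2 * n)
  have quarter : ∀ j : ℕ, 2 * (1 / ((2 * j : ℕ) : ℝ) ^ 2) = 1 / (j : ℝ) ^ 2 / 2 := fun j => by
    push_cast; rcases eq_or_ne (j : ℝ) 0 with h | h
    · simp [h]
    · field_simp
  simp only [mul_sum, quarter, mul_one_div, show 2 * n / 2 = n by omega] at parity
  rw [sum_Ioc_foldTerm 2 (Nat.zero_le n), Nat.sub_zero]
  simp only [← Icc_add_one_left_eq_Ioc, zero_add, ← sum_div] at parity ⊢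
  linear_combination parity

theorem c_sub_eq_foldTerm {n a : ℕ} (ha : 0 < a) (han : a ≤ n) :
    c n (n - a) = -8 * foldTerm 1 n a * ∑ i ∈ Ioc a n, foldTerm 1 n i
      - 4 * foldTerm 1 n a ^ 2 - 4 * foldTerm 2 n a := by
  have harmonic : H (n + (n - a)) - H (n - (n - a)) - H ((n + (n - a)) / 2) + H ((n - (n - a)) / 2)
      = -∑ i ∈ Ioc a n, foldTerm 1 n i := by
    have high := H_sub_H_div_two (2 * n - a)
    have low := H_sub_H_div_two a
    rw [show n + (n - a) = 2 * n - a by omega, Nat.sub_sub_self han, sum_Ioc_foldTerm 1 han,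
      ← sum_Ioc_consecutive _ (Nat.zero_le a) (show a ≤ 2 * n - a by omega)] at *
    simp only [pow_one]
    linear_combination high - low
  have sign : (-1 : ℝ) ^ (n + (n - a)) = (-1) ^ a := by
    rw [neg_one_pow_eq_pow_mod_two, show (n + (n - a)) % 2 = a % 2 by omega,
      ← neg_one_pow_eq_pow_mod_two]
  have ha_ne : (a : ℝ) ≠ 0 := by positivity
  have hmirror_ne : 2 * (n : ℝ) + 1 - a ≠ 0 := by
    have : (a : ℝ) ≤ n := by exact_mod_cast han
    linarith
  rw [c, harmonic, sign, Nat.cast_sub han, sub_sub_cancel,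
    show (n : ℝ) + (n - a) + 1 = 2 * n + 1 - a by ring, foldTerm, foldTerm]
  rcases neg_one_pow_eq_or ℝ a with h | h <;> rw [h] <;> field_simp <;> ring

theorem sum_range_c_eq (n : ℕ) :
    ∑ k ∈ range n, c n k =
      -4 * (∑ i ∈ Ioc 0 n, foldTerm 1 n i) ^ 2 - 4 * ∑ i ∈ Ioc 0 n, foldTerm 2 n i := by
  rw [sum_range_eq_sum_Ioc_sub,
    sum_congr rfl fun a ha => c_sub_eq_foldTerm (mem_Ioc.1 ha).1 (mem_Ioc.1 ha).2, sq_sum_Ioc_eq]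
  simp only [sum_sub_distrib, mul_assoc, ← mul_sum]
  ring

/-- For every natural number `n`,
`∑_{k=0}^{n-1} c_{nk} = 4 ∑_{k=1}^{2n} 1/k² - 2 ∑_{k=1}^{n} 1/k² - 4(H_{2n} - H_n)²`;
equivalently, `c_{nn} := -∑_{k=0}^{n-1} c_{nk}` equals
`4(H_{2n}-H_n)² - 4 ∑_{k=1}^{2n} 1/k² + 2 ∑_{k=1}^{n} 1/k²`. -/
theorem sum_c_coefficients (n : ℕ) :
    (∑ k ∈ Finset.range n, c n k =
        4 * (∑ k ∈ Finset.Icc 1 (2 * n), (1 : ℝ) / (k : ℝ) ^ 2)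
          - 2 * (∑ k ∈ Finset.Icc 1 n, (1 : ℝ) / (k : ℝ) ^ 2)
          - 4 * (H (2 * n) - H n) ^ 2) ∧
      (-(∑ k ∈ Finset.range n, c n k) =
        4 * (H (2 * n) - H n) ^ 2
          - 4 * (∑ k ∈ Finset.Icc 1 (2 * n), (1 : ℝ) / (k : ℝ) ^ 2)
          + 2 * (∑ k ∈ Finset.Icc 1 n, (1 : ℝ) / (k : ℝ) ^ 2)) := by
  rw [sum_range_c_eq, sum_foldTerm_one, sum_foldTerm_two]
  constructor <;> ring
end
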